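/- Under the hypotheses of the previous estimate, if additionally |f'(x)| < 1/10 and |g'(x) - 1| < 1/10 on [0, ℓ₁], then ∫₀^{ℓ₁} |h|² + ∫₀^{ℓ₁} |h'|² ≥ (59 ℓ₁/100)(|a|² + |b|²), where h = a f + b g. -/

import Mathlib

/-!
Pointwise, `(h, h')` is the image of `(a, b)` under the real matrix `[[f, g], [f', g']]`, which is
within `1/10` of the identity entrywise. Its columns have squared length at least `81/100` and
inner product at most `22/100` in absolute value, so by Cauchy–Schwarz
`|h|² + |h'|² ≥ (81/100 - 22/100)(|a|² + |b|²)`; integrating over `[0, ℓ₁]` gives the bound.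
-/

section NearIdentity

variable {E : Type*} [NormedAddCommGroup E] [InnerProductSpace ℝ E]

theorem norm_smul_add_smul_sq (p q : ℝ) (x y : E) :
    ‖p • x + q • y‖ ^ 2 = p ^ 2 * ‖x‖ ^ 2 + 2 * (p * q) * inner ℝ x y + q ^ 2 * ‖y‖ ^ 2 := by
  rw [norm_add_sq_real, norm_smul, norm_smul, real_inner_smul_left, real_inner_smul_right,
    Real.norm_eq_abs, Real.norm_eq_abs, mul_pow, mul_pow, sq_abs, sq_abs]
  ring

theorem sub_mul_le_of_gram_bounds {P Q γ m c : ℝ} (x y : E) (hP : m ≤ P) (hQ : m ≤ Q)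
    (hγ : |γ| ≤ c) :
    (m - c) * (‖x‖ ^ 2 + ‖y‖ ^ 2) ≤ P * ‖x‖ ^ 2 + 2 * γ * inner ℝ x y + Q * ‖y‖ ^ 2 := by
  have hxy : |2 * inner ℝ x y| ≤ ‖x‖ ^ 2 + ‖y‖ ^ 2 := by
    rw [abs_mul, abs_two]
    nlinarith [abs_real_inner_le_norm x y, sq_nonneg (‖x‖ - ‖y‖)]
  have hcross : |γ * (2 * inner ℝ x y)| ≤ c * (‖x‖ ^ 2 + ‖y‖ ^ 2) := by
    rw [abs_mul]
    exact mul_le_mul hγ hxy (abs_nonneg _) ((abs_nonneg γ).trans hγ)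
  nlinarith [neg_abs_le (γ * (2 * inner ℝ x y)), mul_le_mul_of_nonneg_right hP (sq_nonneg ‖x‖),
    mul_le_mul_of_nonneg_right hQ (sq_nonneg ‖y‖)]

variable {p q p' q' : ℝ}

theorem le_sq_add_sq_of_abs_sub_one_le (hp : |p - 1| ≤ 1 / 10) (r : ℝ) :
    81 / 100 ≤ p ^ 2 + r ^ 2 := by
  nlinarith [(abs_le.mp hp).1, sq_nonneg r]

theorem abs_mul_add_mul_le_of_near_identity (hp : |p - 1| ≤ 1 / 10) (hq : |q| ≤ 1 / 10)
    (hp' : |p'| ≤ 1 / 10) (hq' : |q' - 1| ≤ 1 / 10) :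
    |p * q + p' * q'| ≤ 22 / 100 := by
  have hp_le : |p| ≤ 11 / 10 := by linarith [abs_sub_abs_le_abs_sub p 1, abs_one (α := ℝ)]
  have hq'_le : |q'| ≤ 11 / 10 := by linarith [abs_sub_abs_le_abs_sub q' 1, abs_one (α := ℝ)]
  calc |p * q + p' * q'| ≤ |p| * |q| + |p'| * |q'| := by
        rw [← abs_mul, ← abs_mul]; exact abs_add_le _ _
    _ ≤ 11 / 10 * (1 / 10) + 1 / 10 * (11 / 10) := by gcongr
    _ = 22 / 100 := by norm_num

theorem le_norm_smul_add_smul_sq_add_of_near_identity (x y : E) (hp : |p - 1| ≤ 1 / 10)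
    (hq : |q| ≤ 1 / 10) (hp' : |p'| ≤ 1 / 10) (hq' : |q' - 1| ≤ 1 / 10) :
    59 / 100 * (‖x‖ ^ 2 + ‖y‖ ^ 2) ≤ ‖p • x + q • y‖ ^ 2 + ‖p' • x + q' • y‖ ^ 2 := by
  have hP := le_sq_add_sq_of_abs_sub_one_le hp p'
  have hQ := le_sq_add_sq_of_abs_sub_one_le hq' q
  have hγ := abs_mul_add_mul_le_of_near_identity hp hq hp' hq'
  have := sub_mul_le_of_gram_bounds x y hP (add_comm (q ^ 2) _ ▸ hQ) hγ
  rw [norm_smul_add_smul_sq, norm_smul_add_smul_sq]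
  linarith

end NearIdentity

theorem mul_le_intervalIntegral_of_le_on {a b c : ℝ} {f : ℝ → ℝ} (hab : a ≤ b)
    (hf : IntervalIntegrable f MeasureTheory.volume a b) (h : ∀ x ∈ Set.Icc a b, c ≤ f x) :
    (b - a) * c ≤ ∫ x in a..b, f x := by
  simpa using intervalIntegral.integral_mono_on hab intervalIntegrable_const hf h

theorem sobolev_lower_bound_on_edge (ℓ₁ : ℝ) (hℓ : 0 < ℓ₁) (f g : ℝ → ℝ)
    (hf : ContDiff ℝ 1 f) (hg : ContDiff ℝ 1 g)
    (hfb : ∀ x ∈ Set.Icc 0 ℓ₁, |f x - 1| < 1 / 10)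
    (hfb' : ∀ x ∈ Set.Icc 0 ℓ₁, |deriv f x| < 1 / 10)
    (hgb : ∀ x ∈ Set.Icc 0 ℓ₁, |g x| < 1 / 10)
    (hgb' : ∀ x ∈ Set.Icc 0 ℓ₁, |deriv g x - 1| < 1 / 10)
    (a b : ℂ) :
    59 * ℓ₁ / 100 * (‖a‖ ^ 2 + ‖b‖ ^ 2) ≤
      (∫ x in (0:ℝ)..ℓ₁, ‖a * (f x : ℂ) + b * (g x : ℂ)‖ ^ 2) +
        ∫ x in (0:ℝ)..ℓ₁, ‖deriv (fun t => a * (f t : ℂ) + b * (g t : ℂ)) x‖ ^ 2 := by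
  have hD : deriv (fun t => a * (f t : ℂ) + b * (g t : ℂ)) =
      fun x => a * ((deriv f x : ℝ) : ℂ) + b * ((deriv g x : ℝ) : ℂ) := by
    ext x
    exact ((((hf.differentiable one_ne_zero x).hasDerivAt.ofReal_comp).const_mul a).add
      (((hg.differentiable one_ne_zero x).hasDerivAt.ofReal_comp).const_mul b)).deriv
  have hint (u v : ℝ → ℝ) (hu : Continuous u) (hv : Continuous v) :
      IntervalIntegrable (fun x => ‖a * (u x : ℂ) + b * (v x : ℂ)‖ ^ 2) MeasureTheory.volume 0 ℓ₁ :=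
    (by fun_prop : Continuous _).intervalIntegrable 0 ℓ₁
  have hint₀ := hint f g hf.continuous hg.continuous
  have hint₁ := hint _ _ (hf.continuous_deriv le_rfl) (hg.continuous_deriv le_rfl)
  rw [hD, ← intervalIntegral.integral_add hint₀ hint₁]
  refine le_of_eq_of_le (by ring) (mul_le_intervalIntegral_of_le_on
    (c := 59 / 100 * (‖a‖ ^ 2 + ‖b‖ ^ 2)) hℓ.le (hint₀.add hint₁) ?_)
  intro x hx
  simp only [mul_comm a, mul_comm b, ← Complex.real_smul]
  exact le_norm_smul_add_smul_sq_add_of_near_identity a b (hfb x hx).le (hgb x hx).le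
    (hfb' x hx).le (hgb' x hx).le
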